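/- Let E be an elliptic curve Y² = X³ + aX + b over ℚ and define φ_n = X·ψ_n² − ψ_{n+1}ψ_{n−1} (reduced by the curve equation), which lies in ℤ[a,b,X]. There exists an effectively computable constant c depending only on E such that h(φ_n) ≤ c·n² for all integers n ≥ 1. -/

import Mathlib

/-!
The ℓ¹ norm of the coefficients is a submultiplicative ring seminorm on `ℚ[X]` dominating every
coefficient, so it suffices to bound it. The (normalised) division polynomials form an elliptic
divisibility sequence: the duplication formulas write the terms of index `2m` and `2m + 1` as
differences of products of four terms of index near `m`, whose squared indices add up to at most
`(2m)² - 3` resp. `(2m + 1)² - 3`. Strong induction therefore bounds the `n`-th term by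
`K ^ (n² - 3)` for any `K ≥ 2` dominating the initial terms, and then
`φₙ = X ψₙ² - ψₙ₊₁ ψₙ₋₁` is bounded by `K ^ (2n² + 1)`, i.e. `h(φₙ) ≤ 3 log K · n²`.
-/

open Polynomial

/-- The logarithmic height of a polynomial with rational coefficients:
`h(f) = max (0, log H(f))` where `H(f)` is the maximum absolute value of the coefficients. -/
noncomputable def polyLogHeight (f : Polynomial ℚ) : ℝ :=
  max 0 (Real.log (⨆ i : ℕ, |((f.coeff i : ℚ) : ℝ)|))

namespace Polynomial

variable {A : Type*} [SeminormedRing A]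

noncomputable def l1Norm (p : A[X]) : ℝ :=
  p.sum fun _ a ↦ ‖a‖

lemma l1Norm_eq_sum_of_support_subset {p : A[X]} {s : Finset ℕ} (hs : p.support ⊆ s) :
    p.l1Norm = ∑ n ∈ s, ‖p.coeff n‖ :=
  sum_eq_of_subset _ (fun _ ↦ norm_zero) hs

@[simp]
lemma l1Norm_zero : (0 : A[X]).l1Norm = 0 := by
  simp [l1Norm]

lemma l1Norm_monomial (n : ℕ) (a : A) : (monomial n a).l1Norm = ‖a‖ :=
  sum_monomial_index _ _ norm_zero

lemma l1Norm_one [NormOneClass A] : (1 : A[X]).l1Norm = 1 := by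
  simpa using l1Norm_monomial 0 (1 : A)

lemma l1Norm_neg (p : A[X]) : (-p).l1Norm = p.l1Norm := by
  simp [l1Norm, sum_def]

lemma l1Norm_add_le (p q : A[X]) : (p + q).l1Norm ≤ p.l1Norm + q.l1Norm := by
  classical
  rw [l1Norm_eq_sum_of_support_subset support_add,
    l1Norm_eq_sum_of_support_subset Finset.subset_union_left,
    l1Norm_eq_sum_of_support_subset Finset.subset_union_right, ← Finset.sum_add_distrib]
  exact Finset.sum_le_sum fun n _ ↦ by simpa only [coeff_add] using norm_add_le _ _

lemma l1Norm_sum_le {ι : Type*} (s : Finset ι) (f : ι → A[X]) :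
    (∑ i ∈ s, f i).l1Norm ≤ ∑ i ∈ s, (f i).l1Norm :=
  Finset.le_sum_of_subadditive _ l1Norm_zero.le l1Norm_add_le s f

lemma l1Norm_mul_le (p q : A[X]) : (p * q).l1Norm ≤ p.l1Norm * q.l1Norm := by
  rw [mul_eq_sum_sum]
  calc _ ≤ ∑ i ∈ p.support, (q.sum fun j a ↦ monomial (i + j) (p.coeff i * a)).l1Norm :=
        l1Norm_sum_le _ _
    _ ≤ ∑ i ∈ p.support, ∑ j ∈ q.support, ‖p.coeff i‖ * ‖q.coeff j‖ := by
        gcongr with i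
        refine (l1Norm_sum_le _ _).trans (Finset.sum_le_sum fun j _ ↦ ?_)
        rw [l1Norm_monomial]
        exact norm_mul_le _ _
    _ = p.l1Norm * q.l1Norm := (Finset.sum_mul_sum _ _ _ _).symm

lemma norm_coeff_le_l1Norm (p : A[X]) (n : ℕ) : ‖p.coeff n‖ ≤ p.l1Norm := by
  classical
  rw [l1Norm_eq_sum_of_support_subset (Finset.subset_union_left (s₂ := {n}))]
  exact Finset.single_le_sum (fun _ _ ↦ norm_nonneg _) (by simp)

lemma supNorm_le_l1Norm (p : A[X]) : p.supNorm ≤ p.l1Norm := by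
  obtain ⟨n, hn⟩ := p.exists_eq_supNorm
  exact hn ▸ p.norm_coeff_le_l1Norm n

noncomputable def l1NormRingSeminorm : RingSeminorm A[X] where
  toFun := l1Norm
  map_zero' := l1Norm_zero
  add_le' := l1Norm_add_le
  neg' := l1Norm_neg
  mul_le' := l1Norm_mul_le

end Polynomial

namespace RingSeminorm

variable {R : Type*} [CommRing R] {ν : RingSeminorm R} {K : ℝ}

lemma map_mul_le_pow_add (hK : 0 ≤ K) {x y : R} {A B : ℕ} (hx : ν x ≤ K ^ A)
    (hy : ν y ≤ K ^ B) : ν (x * y) ≤ K ^ (A + B) :=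
  (map_mul_le_mul ν x y).trans <| pow_add K A B ▸
    mul_le_mul hx hy (apply_nonneg ν y) (pow_nonneg hK A)

lemma map_pow_le_pow_mul {x : R} {A k : ℕ} (hk : k ≠ 0) (hx : ν x ≤ K ^ A) :
    ν (x ^ k) ≤ K ^ (A * k) :=
  (map_pow_le_pow ν x hk).trans <| pow_mul K A k ▸ pow_le_pow_left₀ (apply_nonneg ν x) hx k

lemma map_sub_le_pow (hK : 2 ≤ K) {x y : R} {A B E : ℕ} (hx : ν x ≤ K ^ A) (hy : ν y ≤ K ^ B)
    (hA : A < E) (hB : B < E) : ν (x - y) ≤ K ^ E := by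
  obtain ⟨E, rfl⟩ : ∃ E', E = E' + 1 := ⟨E - 1, by omega⟩
  have hA' : K ^ A ≤ K ^ E := pow_le_pow_right₀ (by linarith) (by omega)
  have hB' : K ^ B ≤ K ^ E := pow_le_pow_right₀ (by linarith) (by omega)
  calc ν (x - y) ≤ ν x + ν y := map_sub_le_add ν x y
    _ ≤ 2 * K ^ E := by linarith
    _ ≤ K ^ (E + 1) := by rw [pow_succ']; gcongr

lemma map_ite_one_le_pow {P : Prop} [Decidable P] (hν1 : ν 1 ≤ 1) (hK : 1 ≤ K) {x : R} {A : ℕ}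
    (hx : ν x ≤ K ^ A) : ν (if P then x else 1) ≤ K ^ A ∧ ν (if P then 1 else x) ≤ K ^ A := by
  have h1 : ν 1 ≤ K ^ A := hν1.trans (one_le_pow₀ hK)
  split_ifs <;> exact ⟨‹_›, ‹_›⟩

lemma map_preNormEDS'_le (hν1 : ν 1 ≤ 1) (hK : 2 ≤ K) {b c d : R} (hb : ν b ≤ K ^ 2)
    (hc : ν c ≤ K) (hd : ν d ≤ K) (n : ℕ) : ν (preNormEDS' b c d n) ≤ K ^ (n ^ 2 - 3) := by
  have hK0 : 0 ≤ K := by linarith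
  have hK1 : 1 ≤ K := by linarith
  induction n using Nat.strong_induction_on with
  | _ n ih =>
    match n with
    | 0 => simp
    | 1 => simpa using hν1
    | 2 => simpa using hν1.trans hK1
    | 3 => simpa using hc.trans (le_self_pow₀ hK1 (by norm_num))
    | 4 => simpa using hd.trans (le_self_pow₀ hK1 (by norm_num))
    | n + 5 =>
      obtain ⟨m, rfl | rfl⟩ := n.even_or_odd'
      · have hβ := map_ite_one_le_pow (P := Even m) hν1 hK1 hb
        rw [show 2 * m + 5 = 2 * (m + 2) + 1 by ring, preNormEDS'_odd]
        refine map_sub_le_pow hK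
          (map_mul_le_pow_add hK0 (map_mul_le_pow_add hK0 (ih (m + 4) (by omega))
            (map_pow_le_pow_mul three_ne_zero (ih (m + 2) (by omega)))) hβ.1)
          (map_mul_le_pow_add hK0 (map_mul_le_pow_add hK0 (ih (m + 1) (by omega))
            (map_pow_le_pow_mul three_ne_zero (ih (m + 3) (by omega)))) hβ.2) ?_ ?_ <;>
        · ring_nf; omega
      · rw [show 2 * m + 1 + 5 = 2 * (m + 3) by ring, preNormEDS'_even]
        refine map_sub_le_pow hK
          (map_mul_le_pow_add hK0 (map_mul_le_pow_add hK0
            (map_pow_le_pow_mul two_ne_zero (ih (m + 2) (by omega))) (ih (m + 3) (by omega)))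
            (ih (m + 5) (by omega)))
          (map_mul_le_pow_add hK0 (map_mul_le_pow_add hK0 (ih (m + 1) (by omega))
            (ih (m + 3) (by omega))) (map_pow_le_pow_mul two_ne_zero (ih (m + 4) (by omega))))
          ?_ ?_ <;>
        · ring_nf; omega

end RingSeminorm

lemma polyLogHeight_eq_max_log_supNorm (f : ℚ[X]) :
    polyLogHeight f = max 0 (Real.log f.supNorm) := by
  simp only [polyLogHeight, supNorm_eq_iSup, ← Rat.norm_cast_real, Real.norm_eq_abs]

lemma polyLogHeight_le_log_of_l1Norm_le {f : ℚ[X]} {B : ℝ} (hB : 1 ≤ B) (hf : f.l1Norm ≤ B) :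
    polyLogHeight f ≤ Real.log B := by
  rw [polyLogHeight_eq_max_log_supNorm]
  refine max_le (Real.log_nonneg hB) ?_
  rcases f.supNorm_nonneg.eq_or_lt with h | h
  · rw [← h, Real.log_zero]
    exact Real.log_nonneg hB
  · exact Real.log_le_log h (f.supNorm_le_l1Norm.trans hf)

namespace WeierstrassCurve

variable {R : Type*} [CommRing R] (W : WeierstrassCurve R) {ν : RingSeminorm R[X]} {K : ℝ}

open RingSeminorm in
lemma map_Φ_le (hν1 : ν 1 ≤ 1) (hK : 2 ≤ K) (hX : ν X ≤ K) (h₂ : ν W.Ψ₂Sq ≤ K)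
    (h₃ : ν W.Ψ₃ ≤ K) (h₄ : ν W.preΨ₄ ≤ K) (n : ℕ) : ν (W.Φ n) ≤ K ^ (2 * n ^ 2 + 1) := by
  have hK0 : 0 ≤ K := by linarith
  have hK1 : 1 ≤ K := by linarith
  have hΨ (k : ℕ) : ν (W.preΨ' k) ≤ K ^ (k ^ 2 - 3) :=
    map_preNormEDS'_le hν1 hK (map_pow_le_pow_mul two_ne_zero (pow_one K ▸ h₂)) h₃ h₄ k
  cases n with
  | zero => simpa using hν1.trans hK1
  | succ n =>
    have hβ := map_ite_one_le_pow (P := Even n) hν1 hK1 (pow_one K ▸ h₂)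
    push_cast
    rw [Φ_ofNat]
    refine map_sub_le_pow hK
      (map_mul_le_pow_add hK0 (map_mul_le_pow_add hK0 (pow_one K ▸ hX)
        (map_pow_le_pow_mul two_ne_zero (hΨ _))) hβ.2)
      (map_mul_le_pow_add hK0 (map_mul_le_pow_add hK0 (hΨ _) (hΨ _)) hβ.1) ?_ ?_ <;>
    · ring_nf; omega

end WeierstrassCurve

theorem stmt_6_general (W : WeierstrassCurve ℚ) :
    ∃ c : ℝ, ∀ n : ℕ, 1 ≤ n → polyLogHeight (W.Φ (n : ℤ)) ≤ c * (n : ℝ) ^ 2 := by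
  set ν : RingSeminorm ℚ[X] := l1NormRingSeminorm
  set K := 2 + ν X + ν W.Ψ₂Sq + ν W.Ψ₃ + ν W.preΨ₄
  obtain ⟨hK, hX, h₂, h₃, h₄⟩ :
      2 ≤ K ∧ ν X ≤ K ∧ ν W.Ψ₂Sq ≤ K ∧ ν W.Ψ₃ ≤ K ∧ ν W.preΨ₄ ≤ K := by
    have h := apply_nonneg ν
    refine ⟨?_, ?_, ?_, ?_, ?_⟩ <;> linarith [h X, h W.Ψ₂Sq, h W.Ψ₃, h W.preΨ₄]
  have hν1 : ν 1 ≤ 1 := (l1Norm_one (A := ℚ)).le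
  have hlogK : 0 ≤ Real.log K := Real.log_nonneg (by linarith)
  refine ⟨3 * Real.log K, fun n hn ↦ ?_⟩
  have hn' : (1 : ℝ) ≤ (n : ℝ) ^ 2 := one_le_pow₀ (by exact_mod_cast hn)
  calc polyLogHeight (W.Φ n) ≤ Real.log (K ^ (2 * n ^ 2 + 1)) :=
        polyLogHeight_le_log_of_l1Norm_le (one_le_pow₀ (by linarith))
          (W.map_Φ_le hν1 hK hX h₂ h₃ h₄ n)
    _ = (2 * n ^ 2 + 1) * Real.log K := by rw [Real.log_pow]; push_cast; ring
    _ ≤ 3 * Real.log K * n ^ 2 := by nlinarith [mul_nonneg (sub_nonneg.2 hn') hlogK]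

/-- For the elliptic curve `Y² = X³ + aX + b` over `ℚ`, the polynomials
`φₙ = X·ψₙ² − ψₙ₊₁ψₙ₋₁` (reduced by the curve equation, i.e. Mathlib's univariate `Φₙ`)
have logarithmic height at most `c·n²`. -/
theorem stmt_6 (a b : ℚ) (hΔ : 4 * a ^ 3 + 27 * b ^ 2 ≠ 0)
    (W : WeierstrassCurve ℚ) (hW : W = ⟨0, 0, 0, a, b⟩) :
    ∃ c : ℝ, ∀ n : ℕ, 1 ≤ n → polyLogHeight (W.Φ (n : ℤ)) ≤ c * (n : ℝ) ^ 2 :=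
  stmt_6_general W
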